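/- arXiv:1110.3147 — 5 statements merged into one kernel-verified Lean document; each statement's English description precedes it below -/
import Mathlib

section
/- If G is a Hamiltonian graph on n vertices (n ≥ 2), then the rainbow connection number of G satisfies rc(G) ≤ ⌈n/2⌉. -/
/-!
Number the edges of a Hamiltonian cycle `0, …, n - 1` and colour edge `i` by `i mod ⌈n/2⌉`.
Two distinct vertices cut the cycle into two arcs whose lengths add up to `n`, so one of them
has length at most `n - ⌈n/2⌉`; along such an arc no two edges receive the same colour.
-/

open SimpleGraph

/-- An edge coloring `c` makes `G` rainbow connected if any two vertices are joined
by a path whose edges have pairwise distinct colors. -/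
def IsRainbowConnected {V α : Type*} (G : SimpleGraph V) (c : Sym2 V → α) : Prop :=
  ∀ u v : V, ∃ p : G.Walk u v, p.IsPath ∧ (p.edges.map c).Nodup

/-- The rainbow connection number of `G`. -/
noncomputable def rc {V : Type*} (G : SimpleGraph V) : ℕ :=
  sInf {k | ∃ c : Sym2 V → Fin k, IsRainbowConnected G c}

/-- A vertex coloring `c` makes `G` rainbow vertex-connected if any two vertices are
joined by a path whose internal vertices have pairwise distinct colors. -/
def IsRainbowVertexConnected {V α : Type*} (G : SimpleGraph V) (c : V → α) : Prop :=
  ∀ u v : V, ∃ p : G.Walk u v, p.IsPath ∧ ((p.support.tail.dropLast).map c).Nodup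

/-- The rainbow vertex-connection number of `G`. -/
noncomputable def rvc {V : Type*} (G : SimpleGraph V) : ℕ :=
  sInf {k | ∃ c : V → Fin k, IsRainbowVertexConnected G c}

/-- `G` has `H` as a minor: there are disjoint nonempty connected branch sets in `G`,
one for each vertex of `H`, with an edge of `G` between the branch sets of any two
adjacent vertices of `H`. -/
def HasMinor {V W : Type*} (G : SimpleGraph V) (H : SimpleGraph W) : Prop :=
  ∃ f : W → Set V,
    (∀ w, (f w).Nonempty) ∧
    (∀ w, (G.induce (f w)).Connected) ∧
    (Pairwise fun w₁ w₂ => Disjoint (f w₁) (f w₂)) ∧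
    (∀ w₁ w₂, H.Adj w₁ w₂ → ∃ v₁ ∈ f w₁, ∃ v₂ ∈ f w₂, G.Adj v₁ v₂)

/-- A graph is outerplanar iff it has neither `K₄` nor `K_{2,3}` as a minor. -/
def IsOuterplanar {V : Type*} (G : SimpleGraph V) : Prop :=
  ¬ HasMinor G (completeGraph (Fin 4)) ∧
  ¬ HasMinor G (completeBipartiteGraph (Fin 2) (Fin 3))

/-- A graph is bridgeless if none of its edges is a bridge. -/
def IsBridgeless {V : Type*} (G : SimpleGraph V) : Prop :=
  ∀ e ∈ G.edgeSet, ¬ G.IsBridge e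

theorem Nat.mod_ne_mod_of_lt_of_lt_two_mul {k a b : ℕ} (hab : a < b) (hba : b < a + 2 * k)
    (hne : b ≠ a + k) : a % k ≠ b % k := by
  intro h
  have := Nat.eq_of_dvd_of_lt_two_mul (by omega) ((Nat.modEq_iff_dvd' hab.le).1 h) (by omega)
  omega

/- Without wrap-around the residues mod `n` differ by `y - x < k`; with it, by `n - (y - x)`,
which lies strictly between `k` and `2k`. -/
theorem Nat.mod_mod_ne_of_lt {n k x y : ℕ} (hn : n ≤ 2 * k) (hxy : x < y) (hyx : y + k < x + n) :
    x % n % k ≠ y % n % k := by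
  obtain ⟨d, rfl⟩ := Nat.exists_eq_add_of_le hxy.le
  have hx : x % n < n := Nat.mod_lt _ (by omega)
  rw [← Nat.mod_add_mod]
  rcases Nat.lt_or_ge (x % n + d) n with hlt | hge
  · rw [Nat.mod_eq_of_lt hlt]
    exact Nat.mod_ne_mod_of_lt_of_lt_two_mul (by omega) (by omega) (by omega)
  · rw [Nat.mod_eq_sub_mod hge, Nat.mod_eq_of_lt (a := x % n + d - n) (by omega)]
    exact (Nat.mod_ne_mod_of_lt_of_lt_two_mul (by omega) (by omega) (by omega)).symm

theorem List.nodup_map_idxOf_mod {α : Type*} [DecidableEq α] {k : ℕ} {L s t : List α}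
    (hL : L.Nodup) (hk : L.length ≤ 2 * k) (hst : s ++ t ~r L) (hs : s.length + k ≤ L.length) :
    (s.map fun e => L.idxOf e % k).Nodup := by
  obtain ⟨m, hm⟩ := hst.symm
  have hpre : s <+: L.rotate m := hm ▸ List.prefix_append s t
  have hidx : ∀ i (hi : i < s.length), L.idxOf s[i] = (i + m) % L.length := by
    intro i hi
    rw [hpre.getElem hi, List.getElem_rotate, hL.idxOf_getElem]
  rw [List.Nodup, List.pairwise_iff_getElem]
  intro i j hi hj hij
  simp only [List.length_map] at hi hj
  simp only [List.getElem_map, hidx]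
  exact Nat.mod_mod_ne_of_lt hk (Nat.add_lt_add_right hij m) (by omega)

namespace SimpleGraph.Walk

variable {V : Type*} {G : SimpleGraph V}

theorem IsCycle.exists_isPath_append_isRotated [DecidableEq V] {w u v : V} {c : G.Walk w w}
    (hc : c.IsCycle) (hu : u ∈ c.support) (hv : v ∈ c.support) (huv : u ≠ v) :
    ∃ (p : G.Walk u v) (q : G.Walk v u), p.IsPath ∧ q.IsPath ∧ p.edges ++ q.edges ~r c.edges := by
  set r := c.rotate u hu
  have hv' : v ∈ r.support := (c.mem_support_rotate_iff u hu).2 hv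
  have hcyc : ((r.takeUntil v hv').append (r.dropUntil v hv')).IsCycle := by
    rw [r.take_spec hv']
    exact hc.rotate hu
  refine ⟨_, _, hcyc.isPath_of_append_left (not_nil_of_ne huv.symm),
    hcyc.isPath_of_append_right (not_nil_of_ne huv), ?_⟩
  rw [← edges_append, r.take_spec hv']
  exact c.rotate_edges u hu

theorem IsHamiltonianCycle.isRainbowConnected_idxOf_mod [Fintype V] [DecidableEq V] {a : V}
    {p : G.Walk a a} (hp : p.IsHamiltonianCycle) :
    IsRainbowConnected G fun e => p.edges.idxOf e % ((Fintype.card V + 1) / 2) := by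
  set n := Fintype.card V
  have hlen : p.edges.length = n := by rw [length_edges, hp.length_eq]
  have hnd : p.edges.Nodup := hp.isCycle.edges_nodup
  intro u v
  by_cases huv : u = v
  · subst huv
    exact ⟨nil, IsPath.nil, by simp⟩
  obtain ⟨q₁, q₂, hq₁, hq₂, hrot⟩ :=
    hp.isCycle.exists_isPath_append_isRotated (hp.mem_support u) (hp.mem_support v) huv
  have hsum : q₁.length + q₂.length = n := by simpa [hlen] using hrot.perm.length_eq
  by_cases hshort : q₁.length + (n + 1) / 2 ≤ n
  · exact ⟨q₁, hq₁, List.nodup_map_idxOf_mod hnd (by omega) hrot (by simpa [hlen])⟩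
  · refine ⟨q₂.reverse, hq₂.reverse, ?_⟩
    rw [edges_reverse, List.map_reverse, List.nodup_reverse]
    exact List.nodup_map_idxOf_mod hnd (by omega) (List.isRotated_append.trans hrot)
      (by rw [hlen, length_edges]; omega)

end SimpleGraph.Walk

theorem rc_le_of_isRainbowConnected {V : Type*} {G : SimpleGraph V} {k : ℕ} {c : Sym2 V → ℕ}
    (h : IsRainbowConnected G c) (hc : ∀ e, c e < k) : rc G ≤ k := by
  refine Nat.sInf_le ⟨fun e => ⟨c e, hc e⟩, fun u v => ?_⟩
  obtain ⟨p, hp, hnd⟩ := h u v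
  exact ⟨p, hp, List.Nodup.of_map Fin.val (by simpa [List.map_map, Function.comp_def] using hnd)⟩

/-- If `G` is a Hamiltonian graph on `n ≥ 2` vertices, then `rc(G) ≤ ⌈n/2⌉`. -/
theorem rc_le_of_isHamiltonian {V : Type*} [Fintype V] [DecidableEq V] (G : SimpleGraph V)
    (hn : 2 ≤ Fintype.card V) (hham : G.IsHamiltonian) :
    rc G ≤ (Fintype.card V + 1) / 2 := by
  obtain ⟨a, p, hp⟩ := hham (by omega)
  exact rc_le_of_isRainbowConnected hp.isRainbowConnected_idxOf_mod fun e => Nat.mod_lt _ (by omega)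
end

section
/- For every n ≥ 4, the cycle C_n on n vertices satisfies rc(C_n) ≤ ⌈n/2⌉. -/
open SimpleGraph

/-
Colour the edge `{i, i + 1}` of `Cₙ` by `i mod ⌈n/2⌉`. Two distinct edges of the same colour
then differ by exactly `⌈n/2⌉` in their indices, so they are at cyclic distance at least
`⌊n/2⌋` in both directions. Any two vertices are joined by an arc of at most `⌊n/2⌋` edges,
and the edges of such an arc are within cyclic distance `< ⌊n/2⌋` of each other, so the arc
is a rainbow path.
-/

theorem IsRainbowConnected.of_forall_or {V α : Type*} {G : SimpleGraph V} {c : Sym2 V → α}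
    (P : V → V → Prop) (hP : ∀ u v, P u v ∨ P v u)
    (h : ∀ u v, P u v → ∃ p : G.Walk u v, p.IsPath ∧ (p.edges.map c).Nodup) :
    IsRainbowConnected G c := by
  intro u v
  rcases hP u v with huv | hvu
  · exact h u v huv
  · obtain ⟨p, hp, hc⟩ := h v u hvu
    refine ⟨p.reverse, hp.reverse, ?_⟩
    rwa [Walk.edges_reverse, List.map_reverse, List.nodup_reverse]

theorem Nat.eq_add_of_mod_eq_of_lt_two_mul {a b k : ℕ} (hab : a < b) (hb : b < 2 * k)
    (h : a % k = b % k) : b = a + k := by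
  obtain ⟨c, hc⟩ := (Nat.modEq_iff_dvd' hab.le).mp h
  have hc2 : c < 2 := by
    by_contra! hc2
    have := Nat.mul_le_mul_left k hc2
    omega
  interval_cases c <;> omega

namespace Fin

variable {n : ℕ}

theorem val_sub_le_or_val_sub_le (u v : Fin n) : (v - u).val ≤ n / 2 ∨ (u - v).val ≤ n / 2 := by
  rcases lt_trichotomy u v with h | rfl | h
  · have h1 := coe_sub_iff_lt.mpr h
    have h2 := coe_sub_iff_le.mpr h.le
    omega
  · have := coe_sub_iff_le.mpr (le_refl u)
    omega
  · have h1 := coe_sub_iff_lt.mpr h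
    have h2 := coe_sub_iff_le.mpr h.le
    omega

theorem sub_le_val_sub_of_val_mod_eq {k : ℕ} (hk : n ≤ 2 * k) {i j : Fin n} (hij : i ≠ j)
    (h : i.val % k = j.val % k) : n - k ≤ (j - i).val := by
  rcases lt_or_gt_of_ne hij with hlt | hlt
  · have := Nat.eq_add_of_mod_eq_of_lt_two_mul hlt (by omega) h
    have := coe_sub_iff_le.mpr hlt.le
    omega
  · have := Nat.eq_add_of_mod_eq_of_lt_two_mul hlt (by omega) h.symm
    have := coe_sub_iff_lt.mpr hlt
    omega

end Fin

namespace SimpleGraph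
open Fin.NatCast

variable {n : ℕ}

theorem cycleGraph_adj_add_one (u : Fin (n + 2)) : (cycleGraph (n + 2)).Adj u (u + 1) :=
  cycleGraph_adj.mpr (Or.inr (add_sub_cancel_left u 1))

namespace cycleGraph

def forwardWalk (u : Fin (n + 2)) : (L : ℕ) → (cycleGraph (n + 2)).Walk u (u + L)
  | 0 => Walk.nil.copy rfl (by simp)
  | L + 1 => Walk.cons (cycleGraph_adj_add_one u)
      ((forwardWalk (u + 1) L).copy rfl (by push_cast; abel))

theorem support_forwardWalk (u : Fin (n + 2)) (L : ℕ) :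
    (forwardWalk u L).support = (List.range (L + 1)).map fun j : ℕ => u + j := by
  induction L generalizing u with
  | zero => simp [forwardWalk]
  | succ L ih =>
    rw [forwardWalk, Walk.support_cons, Walk.support_copy, ih, List.range_succ_eq_map (n := L + 1)]
    simp only [List.map_cons, List.map_map, Nat.cast_zero, add_zero]
    congr 1
    refine List.map_congr_left fun j _ => ?_
    simp only [Function.comp_apply, Nat.cast_succ]
    abel

theorem edges_forwardWalk (u : Fin (n + 2)) (L : ℕ) :
    (forwardWalk u L).edges = (List.range L).map fun j : ℕ => s(u + j, u + j + 1) := by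
  induction L generalizing u with
  | zero => simp [forwardWalk]
  | succ L ih =>
    rw [forwardWalk, Walk.edges_cons, Walk.edges_copy, ih, List.range_succ_eq_map]
    simp only [List.map_cons, List.map_map, Nat.cast_zero, add_zero]
    congr 1
    refine List.map_congr_left fun j _ => ?_
    simp only [Function.comp_apply, Nat.cast_succ, ← add_assoc, add_right_comm u 1]

theorem isPath_forwardWalk (u : Fin (n + 2)) {L : ℕ} (hL : L < n + 2) :
    (forwardWalk u L).IsPath := by
  rw [Walk.isPath_def, support_forwardWalk]
  refine List.Nodup.map_on (fun i hi j hj hij => ?_) List.nodup_range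
  simp only [List.mem_range] at hi hj
  have := congrArg Fin.val (add_left_cancel hij)
  rwa [Fin.val_natCast, Fin.val_natCast, Nat.mod_eq_of_lt (by omega),
    Nat.mod_eq_of_lt (by omega)] at this

-- Fails on `Fin 2`, where `s(0, 1) = s(1, 0)`; hence the colouring lives on at least three vertices.
theorem injective_mk_add_one : Function.Injective fun i : Fin (n + 3) => s(i, i + 1) := by
  intro i j hij
  rcases Sym2.eq_iff.mp hij with ⟨h, -⟩ | ⟨hi, hj⟩
  · exact h
  · have h2 : (1 + 1 : Fin (n + 3)) = 0 := by
      rw [← add_eq_left (a := i)]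
      nth_rewrite 2 [hi]
      rw [← hj, add_assoc]
    simp only [Fin.ext_iff, Fin.val_add, Fin.coe_ofNat_eq_mod, Nat.one_mod, Nat.zero_mod] at h2
    rw [Nat.mod_eq_of_lt (by omega)] at h2
    omega

noncomputable def edgeColoring {α : Type*} (f : Fin (n + 3) → α) : Sym2 (Fin (n + 3)) → α :=
  Function.extend (fun i => s(i, i + 1)) f fun _ => f 0

theorem edgeColoring_mk {α : Type*} (f : Fin (n + 3) → α) (i : Fin (n + 3)) :
    edgeColoring f s(i, i + 1) = f i :=
  injective_mk_add_one.extend_apply f _ i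

theorem nodup_map_edgeColoring_edges_forwardWalk {α : Type*} {f : Fin (n + 3) → α}
    {L : ℕ} (hf : ∀ i j, i ≠ j → f i = f j → L ≤ (j - i).val) (hL : L < n + 3)
    (u : Fin (n + 3)) : ((forwardWalk u L).edges.map (edgeColoring f)).Nodup := by
  have hcolour_ne : ∀ j₁ j₂ : ℕ, j₁ < j₂ → j₂ < L → f (u + j₁) ≠ f (u + j₂) := by
    intro j₁ j₂ hj hj₂ hc
    obtain ⟨d, rfl⟩ := Nat.exists_eq_add_of_le hj.le
    have hsub : ((u + (j₁ + d : ℕ)) - (u + j₁) : Fin (n + 3)).val = d := by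
      rw [Nat.cast_add, add_sub_add_left_eq_sub, add_sub_cancel_left, Fin.val_natCast,
        Nat.mod_eq_of_lt (by omega)]
    have hne : (u + j₁ : Fin (n + 3)) ≠ u + (j₁ + d : ℕ) := fun he => by
      rw [he, sub_self, Fin.val_zero] at hsub
      omega
    have := hf _ _ hne hc
    omega
  rw [edges_forwardWalk, List.map_map]
  refine List.Nodup.map_on (fun j₁ hj₁ j₂ hj₂ hc => ?_) List.nodup_range
  simp only [Function.comp_apply, edgeColoring_mk] at hc
  simp only [List.mem_range] at hj₁ hj₂
  rcases lt_trichotomy j₁ j₂ with h | h | h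
  · exact absurd hc (hcolour_ne _ _ h hj₂)
  · exact h
  · exact absurd hc.symm (hcolour_ne _ _ h hj₁)

theorem isRainbowConnected_edgeColoring {α : Type*} {f : Fin (n + 3) → α}
    (hf : ∀ i j, i ≠ j → f i = f j → (n + 3) / 2 ≤ (j - i).val) :
    IsRainbowConnected (cycleGraph (n + 3)) (edgeColoring f) := by
  refine IsRainbowConnected.of_forall_or (fun u v => (v - u).val ≤ (n + 3) / 2)
    (fun u v => Fin.val_sub_le_or_val_sub_le u v) fun u v huv => ?_
  refine ⟨(forwardWalk u (v - u).val).copy rfl (by simp), ?_, ?_⟩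
  · exact (Walk.isPath_copy _ _ _).mpr (isPath_forwardWalk u (by omega))
  · rw [Walk.edges_copy]
    exact nodup_map_edgeColoring_edges_forwardWalk
      (fun i j hij h => huv.trans (hf i j hij h)) (by omega) u

end cycleGraph
end SimpleGraph

/-- For every `n ≥ 4`, the cycle `Cₙ` on `n` vertices satisfies `rc(Cₙ) ≤ ⌈n/2⌉`. -/
theorem rc_cycleGraph_le (n : ℕ) (hn : 4 ≤ n) :
    rc (SimpleGraph.cycleGraph n) ≤ (n + 1) / 2 := by
  obtain ⟨m, rfl⟩ : ∃ m, n = m + 3 := ⟨n - 3, by omega⟩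
  refine Nat.sInf_le ⟨cycleGraph.edgeColoring fun i => ⟨i.val % ((m + 3 + 1) / 2),
    Nat.mod_lt _ (by omega)⟩, cycleGraph.isRainbowConnected_edgeColoring fun i j hij h => ?_⟩
  have := Fin.sub_le_val_sub_of_val_mod_eq (k := (m + 3 + 1) / 2) (by omega) hij (Fin.mk.inj h)
  omega
end

section
/- Let G be a connected graph with minimum degree at least 2, and let D be a connected dominating set of G. Then rc(G) ≤ rc(G[D]) + 3, where G[D] is the subgraph of G induced by D. -/
open SimpleGraph

/-!
Colour `G[D]` by an optimal rainbow colouring and add three new colours: `none` on the edges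
outside `D`, and one of two labels `some b` on each edge from `v ∉ D` to `D`. If `v` has two
neighbours in `D`, it sends both labels to `D`. Otherwise all its edges to `D` carry the colour
`f v` of a 2-colouring `f` of a spanning forest of the graph on such vertices; as `v` has degree
at least 2, it has a neighbour `w ∉ D`, and `w` can be chosen to send the other label to `D`.
So every vertex reaches `D` by a rainbow walk avoiding any prescribed label, and two vertices
are joined by a rainbow walk: an exit of the first, a rainbow path in `D`, and an exit of the
second avoiding the label of the first.
-/

namespace SimpleGraph

variable {V : Type*}

theorem exists_adj_ne_of_one_lt_degree {G : SimpleGraph V} {v : V} [Fintype (G.neighborSet v)]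
    (h : 1 < G.degree v) (x : V) : ∃ w, G.Adj v w ∧ w ≠ x := by
  obtain ⟨w, hw, hwx⟩ := (G.neighborFinset v).exists_mem_ne
    (by rwa [card_neighborFinset_eq_degree]) x
  exact ⟨w, (G.mem_neighborFinset v w).1 hw, hwx⟩

theorem exists_bool_exists_adj_ne (G : SimpleGraph V) :
    ∃ f : V → Bool, ∀ ⦃v w⦄, G.Adj v w → ∃ u, G.Adj v u ∧ f u ≠ f v := by
  obtain ⟨F, hFG, hF, hreach⟩ := G.exists_isAcyclic_reachable_eq_le
  refine ⟨finTwoEquiv ∘ hF.coloringTwo, fun v w hvw => ?_⟩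
  obtain ⟨p⟩ : F.Reachable v w := hreach ▸ hvw.reachable
  have hp : ¬p.Nil := fun h => hvw.ne h.eq
  exact ⟨p.snd, hFG (p.adj_snd hp),
    finTwoEquiv.injective.ne (hF.coloringTwo.valid (p.adj_snd hp)).symm⟩

end SimpleGraph

section Rainbow

variable {V α : Type*} {G : SimpleGraph V} {c : Sym2 V → α}

theorem IsRainbowConnected.of_forall_exists_walk
    (h : ∀ u v, ∃ p : G.Walk u v, (p.edges.map c).Nodup) : IsRainbowConnected G c := by
  classical
  intro u v
  obtain ⟨p, hp⟩ := h u v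
  exact ⟨p.bypass, p.bypass_isPath, hp.sublist (p.edges_bypass_sublist_edges.map c)⟩

theorem IsRainbowConnected.comp {β : Type*} (hc : IsRainbowConnected G c) {g : α → β}
    (hg : Function.Injective g) : IsRainbowConnected G (g ∘ c) := by
  intro u v
  obtain ⟨p, hp, hnd⟩ := hc u v
  exact ⟨p, hp, by rw [← List.map_map]; exact hnd.map hg⟩

theorem IsRainbowConnected.rc_le_card [Fintype α] (hc : IsRainbowConnected G c) :
    rc G ≤ Fintype.card α :=
  Nat.sInf_le ⟨_, hc.comp (Fintype.equivFin α).injective⟩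

theorem SimpleGraph.Connected.isRainbowConnected_of_injective (hG : G.Connected)
    (hc : Function.Injective c) : IsRainbowConnected G c := by
  classical
  intro u v
  obtain ⟨p⟩ := hG.preconnected u v
  exact ⟨p.bypass, p.bypass_isPath, p.bypass_isPath.isTrail.edges_nodup.map hc⟩

theorem SimpleGraph.Connected.exists_isRainbowConnected_fin_rc [Finite V] (hG : G.Connected) :
    ∃ c : Sym2 V → Fin (rc G), IsRainbowConnected G c :=
  Nat.sInf_mem (s := {k | ∃ c : Sym2 V → Fin k, IsRainbowConnected G c})
    ⟨_, _, hG.isRainbowConnected_of_injective (Finite.equivFin (Sym2 V)).injective⟩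

theorem IsRainbowConnected.of_exits {D : Set V} {S : Set α}
    (hD : ∀ a ∈ D, ∀ b ∈ D, ∃ p : G.Walk a b,
      (p.edges.map c).Nodup ∧ ∀ x ∈ p.edges.map c, x ∈ S)
    (hexit : ∀ u v, ∃ a ∈ D, ∃ b ∈ D, ∃ p : G.Walk u a, ∃ q : G.Walk v b,
      (p.edges.map c ++ q.edges.map c).Nodup ∧
        ∀ x ∈ p.edges.map c ++ q.edges.map c, x ∉ S) :
    IsRainbowConnected G c := by
  refine .of_forall_exists_walk fun u v => ?_
  obtain ⟨a, ha, b, hb, p, q, hpq, hpqS⟩ := hexit u v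
  obtain ⟨m, hm, hmS⟩ := hD a ha b hb
  refine ⟨p.append (m.append q.reverse), ?_⟩
  have hperm : ((p.append (m.append q.reverse)).edges.map c).Perm
      (m.edges.map c ++ (p.edges.map c ++ q.edges.map c)) := by
    simp only [SimpleGraph.Walk.edges_append, SimpleGraph.Walk.edges_reverse, List.map_append,
      List.map_reverse]
    exact (((q.edges.map c).reverse_perm.append_left _).append_left _).trans
      (List.perm_append_comm_assoc _ _ _)
  rw [hperm.nodup_iff, List.nodup_append]
  exact ⟨hm, hpq, fun x hx y hy hxy => hpqS y hy (hxy ▸ hmS x hx)⟩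

end Rainbow

section ExitColoring

variable {V β : Type*}

open Classical in
/-- Inner colours `inl` come from `c`; an edge from `v ∉ D` to `u ∈ D` gets the label
`some (out v u)`, and an edge with no end in `D` gets `none`. -/
noncomputable def exitColoring (D : Set V) (c : Sym2 D → β) (out : V → V → Bool) :
    Sym2 V → β ⊕ Option Bool :=
  Sym2.lift ⟨fun a b =>
    if ha : a ∈ D then
      if hb : b ∈ D then .inl (c s(⟨a, ha⟩, ⟨b, hb⟩)) else .inr (some (out b a))
    else if b ∈ D then .inr (some (out a b)) else .inr none,
    fun a b => by by_cases ha : a ∈ D <;> by_cases hb : b ∈ D <;> simp [ha, hb, Sym2.eq_swap]⟩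

def HasExit (G : SimpleGraph V) (D : Set V) (out : V → V → Bool) (v : V) (b : Bool) : Prop :=
  ∃ u ∈ D, G.Adj v u ∧ out v u = b

def IsExitLabelling (G : SimpleGraph V) (D : Set V) (out : V → V → Bool) : Prop :=
  ∀ v ∉ D, ∀ b, HasExit G D out v b ∨ ∃ w ∉ D, G.Adj v w ∧ HasExit G D out w b

variable {G : SimpleGraph V} {D : Set V} {c : Sym2 D → β} {out : V → V → Bool}

theorem exitColoring_mk_val (a b : D) : exitColoring D c out s(a, b) = .inl (c s(a, b)) := by
  simp [exitColoring]

theorem exitColoring_mk_of_notMem_of_mem {v u : V} (hv : v ∉ D) (hu : u ∈ D) :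
    exitColoring D c out s(v, u) = .inr (some (out v u)) := by
  simp [exitColoring, hv, hu]

theorem exitColoring_mk_of_notMem_of_notMem {v w : V} (hv : v ∉ D) (hw : w ∉ D) :
    exitColoring D c out s(v, w) = .inr none := by
  simp [exitColoring, hv, hw]

theorem exists_walk_map_exitColoring_of_isRainbowConnected
    (hc : IsRainbowConnected (G.induce D) c) {a b : V} (ha : a ∈ D) (hb : b ∈ D) :
    ∃ p : G.Walk a b, (p.edges.map (exitColoring D c out)).Nodup ∧
      ∀ x ∈ p.edges.map (exitColoring D c out), x ∈ Set.range Sum.inl := by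
  obtain ⟨p, -, hp⟩ := hc ⟨a, ha⟩ ⟨b, hb⟩
  let q : G.Walk a b := p.map (Embedding.induce D).toHom
  have hq : q.edges.map (exitColoring D c out) = (p.edges.map c).map Sum.inl := by
    rw [show q.edges = _ from Walk.edges_map _ p, List.map_map, List.map_map]
    refine List.map_congr_left fun e _ => ?_
    induction e using Sym2.ind with
    | _ x y => exact exitColoring_mk_val x y
  refine ⟨q, ?_, ?_⟩ <;> rw [hq]
  · exact hp.map Sum.inl_injective
  · simp

theorem HasExit.exists_walk_map_exitColoring {v : V} {b : Bool} (hv : v ∉ D)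
    (h : HasExit G D out v b) :
    ∃ a ∈ D, ∃ p : G.Walk v a, p.edges.map (exitColoring D c out) = [.inr (some b)] := by
  obtain ⟨u, hu, hvu, rfl⟩ := h
  exact ⟨u, hu, .cons hvu .nil, by simp [exitColoring_mk_of_notMem_of_mem hv hu]⟩

theorem exists_walk_map_exitColoring_sublist_some (hdom : ∀ v ∉ D, ∃ u ∈ D, G.Adj u v)
    (v : V) :
    ∃ b, ∃ a ∈ D, ∃ p : G.Walk v a,
      (p.edges.map (exitColoring D c out)).Sublist [.inr (some b)] := by
  by_cases hv : v ∈ D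
  · exact ⟨true, v, hv, .nil, by simp⟩
  obtain ⟨u, hu, huv⟩ := hdom v hv
  have hexit : HasExit G D out v (out v u) := ⟨u, hu, huv.symm, rfl⟩
  obtain ⟨a, ha, p, hp⟩ := hexit.exists_walk_map_exitColoring (c := c) hv
  exact ⟨_, a, ha, p, by rw [hp]⟩

theorem exists_walk_map_exitColoring_sublist_none_some
    (hout : IsExitLabelling G D out) (v : V) (b : Bool) :
    ∃ a ∈ D, ∃ p : G.Walk v a,
      (p.edges.map (exitColoring D c out)).Sublist [.inr none, .inr (some b)] := by
  by_cases hv : v ∈ D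
  · exact ⟨v, hv, .nil, by simp⟩
  rcases hout v hv b with h | ⟨w, hw, hvw, h⟩
  · obtain ⟨a, ha, p, hp⟩ := h.exists_walk_map_exitColoring (c := c) hv
    exact ⟨a, ha, p, by simp [hp]⟩
  · obtain ⟨a, ha, p, hp⟩ := h.exists_walk_map_exitColoring (c := c) hw
    refine ⟨a, ha, .cons hvw p, ?_⟩
    simp [hp, exitColoring_mk_of_notMem_of_notMem hv hw]

theorem isRainbowConnected_exitColoring (hc : IsRainbowConnected (G.induce D) c)
    (hdom : ∀ v ∉ D, ∃ u ∈ D, G.Adj u v)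
    (hout : IsExitLabelling G D out) :
    IsRainbowConnected G (exitColoring D c out) := by
  refine .of_exits (S := Set.range Sum.inl)
    (fun a ha b hb => exists_walk_map_exitColoring_of_isRainbowConnected hc ha hb)
    fun u v => ?_
  obtain ⟨b, a', ha', q, hq⟩ := exists_walk_map_exitColoring_sublist_some (c := c) hdom v
  obtain ⟨a, ha, p, hp⟩ := exists_walk_map_exitColoring_sublist_none_some (c := c) hout u (!b)
  have hpq := hp.append hq
  refine ⟨a, ha, a', ha', p, q, hpq.nodup (by cases b <;> simp), fun x hx => ?_⟩
  have := hpq.subset hx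
  simp only [List.cons_append, List.nil_append, List.mem_cons, List.not_mem_nil, or_false] at this
  rcases this with rfl | rfl | rfl <;> simp

end ExitColoring

theorem exists_isExitLabelling {V : Type*} [Fintype V] {G : SimpleGraph V}
    [DecidableRel G.Adj] {D : Set V} (hmin : ∀ v, 2 ≤ G.degree v)
    (hdom : ∀ v ∉ D, ∃ u ∈ D, G.Adj u v) :
    ∃ out : V → V → Bool, IsExitLabelling G D out := by
  classical
  choose! d hdD hdadj using hdom
  let TwoExits (v : V) : Prop := ∃ u ∈ D, G.Adj v u ∧ u ≠ d v
  let H : SimpleGraph V := ((⊤ : G.Subgraph).induce {v | v ∉ D ∧ ¬TwoExits v}).spanningCoe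
  obtain ⟨f, hf⟩ := H.exists_bool_exists_adj_ne
  let out (v u : V) : Bool := if TwoExits v then decide (u = d v) else f v
  have htwo : ∀ v ∉ D, TwoExits v → ∀ b, HasExit G D out v b := by
    rintro v hv htv (_ | _)
    · have ⟨u, hu, hvu, hud⟩ := htv
      exact ⟨u, hu, hvu, by simp [out, hud, htv]⟩
    · exact ⟨d v, hdD v hv, (hdadj v hv).symm, by simp [out, htv]⟩
  have hsingle : ∀ v ∉ D, ¬TwoExits v → HasExit G D out v (f v) := fun v hv htv =>
    ⟨d v, hdD v hv, (hdadj v hv).symm, by simp [out, htv]⟩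
  refine ⟨out, fun v hv b => ?_⟩
  by_cases htv : TwoExits v
  · exact .inl (htwo v hv htv b)
  by_cases hfv : f v = b
  · exact .inl (hfv ▸ hsingle v hv htv)
  refine .inr ?_
  by_cases hw : ∃ w ∉ D, G.Adj v w ∧ TwoExits w
  · obtain ⟨w, hw, hvw, htw⟩ := hw
    exact ⟨w, hw, hvw, htwo w hw htw b⟩
  push Not at hw
  obtain ⟨w, hvw, hwd⟩ := G.exists_adj_ne_of_one_lt_degree (hmin v) (d v)
  have hwD : w ∉ D := fun hwD => htv ⟨w, hwD, hvw, hwd⟩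
  have hHvw : H.Adj v w := ⟨⟨hv, htv⟩, ⟨hwD, hw w hwD hvw⟩, hvw⟩
  obtain ⟨u, ⟨-, ⟨hu, htu⟩, hvu⟩, hfu⟩ := hf hHvw
  have hfub : f u = b := by cases b <;> simp_all
  exact ⟨u, hu, hvu, hfub ▸ hsingle u hu htu⟩

theorem rc_le_rc_induce_connected_dominating_add_three_general {V : Type*} [Fintype V]
    (G : SimpleGraph V) [DecidableRel G.Adj]
    (hmin : ∀ v : V, 2 ≤ G.degree v) (D : Set V)
    (hdom : ∀ v ∉ D, ∃ u ∈ D, G.Adj u v) (hDconn : (G.induce D).Connected) :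
    rc G ≤ rc (G.induce D) + 3 := by
  obtain ⟨c, hc⟩ := hDconn.exists_isRainbowConnected_fin_rc
  obtain ⟨out, hout⟩ := exists_isExitLabelling hmin hdom
  calc rc G ≤ Fintype.card (Fin (rc (G.induce D)) ⊕ Option Bool) :=
        (isRainbowConnected_exitColoring hc hdom hout).rc_le_card
    _ = rc (G.induce D) + 3 := by simp

/-- If `G` is a connected graph with minimum degree at least 2 and `D` is a connected
dominating set of `G`, then `rc(G) ≤ rc(G[D]) + 3`. -/
theorem rc_le_rc_induce_connected_dominating_add_three {V : Type*} [Fintype V]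
    (G : SimpleGraph V) [DecidableRel G.Adj] (hconn : G.Connected)
    (hmin : ∀ v : V, 2 ≤ G.degree v) (D : Set V)
    (hdom : ∀ v ∉ D, ∃ u ∈ D, G.Adj u v) (hDconn : (G.induce D).Connected) :
    rc G ≤ rc (G.induce D) + 3 :=
  rc_le_rc_induce_connected_dominating_add_three_general G hmin D hdom hDconn
end

section
/- For a connected graph G on n ≥ 2 vertices, rc(G) = n − 1 if and only if G is a tree. -/
open SimpleGraph

/-!
A rainbow colouring of a tree is injective on edges, because any two edges of a tree lie on a
common path and that path is the only one between its ends; as a tree on `n` vertices has `n - 1`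
edges, its rainbow connection number is `n - 1`.

If `G` is connected but not a tree, take a spanning tree `T`, an edge `uv` of `G` outside `T`, and
the first and last edges `f₁`, `f₂` of the `T`-path `P` from `u` to `v`. Colour the edges of `T`
other than `f₂` injectively with `n - 2` colours and give every other edge the colour of `f₁`.
A `T`-path missing `f₁` or `f₂` is then rainbow; a `T`-path through both contains all of `P`, and
replacing `P` by the edge `uv` gives a rainbow path.
-/

theorem Set.InjOn.insert_sdiff_singleton {α β : Type*} {f : α → β} {s : Set α} {a b : α}
    (hf : Set.InjOn f s) (ha : a ∈ s) (hba : f b = f a) :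
    Set.InjOn f (insert b (s \ {a})) := by
  have hb : b ∉ s \ {a} := fun h => h.2 (hf h.1 ha hba)
  rw [Set.injOn_insert hb]
  refine ⟨hf.mono Set.sdiff_subset, ?_⟩
  rintro ⟨x, ⟨hx, hxa⟩, hfx⟩
  exact hxa (hf hx ha (hfx.trans hba))

theorem Set.Finite.exists_fin_injOn_of_mem {α : Type*} {s : Set α} (hs : s.Finite) {k : ℕ}
    (hk : s.ncard ≤ k) {a : α} (ha : a ∈ s) :
    ∃ c : α → Fin k, Set.InjOn c s ∧ ∀ x ∉ s, c x = c a := by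
  classical
  have : Finite s := hs
  let ι : s ↪ Fin k := (Finite.equivFin s).toEmbedding.trans
    (Fin.castLEEmb (by rwa [Nat.card_coe_set_eq]))
  refine ⟨fun x => if h : x ∈ s then ι ⟨x, h⟩ else ι ⟨a, ha⟩, ?_, fun x hx => by simp [hx, ha]⟩
  intro x hx y hy hxy
  simpa [hx, hy] using hxy

namespace SimpleGraph

variable {V : Type*} {G T : SimpleGraph V}

theorem Walk.IsTrail.nodup_map_edges_of_injOn {α : Type*} {u v : V} {p : G.Walk u v}
    (hp : p.IsTrail) {c : Sym2 V → α} {s : Set (Sym2 V)} (hc : Set.InjOn c s)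
    (hs : ∀ e ∈ p.edges, e ∈ s) : (p.edges.map c).Nodup :=
  hp.edges_nodup.map_on fun _ hx _ hy => hc (hs _ hx) (hs _ hy)

theorem IsAcyclic.exists_isPath_extending_of_adj (hG : G.IsAcyclic) {u v w : V}
    {p : G.Walk u v} (hp : p.IsPath) (hvw : G.Adj v w) :
    ∃ (x : V) (q : G.Walk u x), q.IsPath ∧ p.edges ⊆ q.edges ∧ s(v, w) ∈ q.edges := by
  classical
  by_cases hw : w ∈ p.support
  · refine ⟨v, p, hp, List.Subset.refl _, ?_⟩
    have hw' : w ∈ p.reverse.support := by simpa using hw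
    have hbridge := isBridge_iff_forall_walk_mem_edges.mp
      (isAcyclic_iff_forall_adj_isBridge.mp hG hvw) (p.reverse.takeUntil w hw')
    simpa using p.reverse.edges_takeUntil_subset_edges hw' hbridge
  · exact ⟨w, p.concat hvw, hp.concat hw hvw, by simp, by simp⟩

theorem IsTree.exists_isPath_mem_edges_mem_edges (hG : G.IsTree) {a b c d : V}
    (hab : G.Adj a b) (hcd : G.Adj c d) :
    ∃ (x y : V) (p : G.Walk x y), p.IsPath ∧ s(a, b) ∈ p.edges ∧ s(c, d) ∈ p.edges := by
  obtain ⟨p, hp, -⟩ := hG.existsUnique_path c a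
  obtain ⟨x, q, hq, -, hab_q⟩ := hG.isAcyclic.exists_isPath_extending_of_adj hp hab
  obtain ⟨y, r, hr, hqr, hcd_r⟩ := hG.isAcyclic.exists_isPath_extending_of_adj hq.reverse hcd
  exact ⟨x, y, r, hr, hqr (by simpa using hab_q), hcd_r⟩

theorem IsTree.ncard_edgeSet_add_one [Finite V] (hG : G.IsTree) :
    G.edgeSet.ncard + 1 = Nat.card V := by
  rw [← Nat.card_coe_set_eq]
  exact (isTree_iff_connected_and_card.mp hG).2

theorem exists_isPath_replacing_segment (hle : T ≤ G) {x u v y : V} {X : T.Walk x u}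
    {M : T.Walk u v} {Y : T.Walk v y} (hR : (X.append (M.append Y)).IsPath) (huv : G.Adj u v) :
    ∃ p : G.Walk x y, p.IsPath ∧ ∀ e ∈ p.edges, e = s(u, v) ∨ (e ∈ T.edgeSet ∧ e ∉ M.edges) := by
  refine ⟨(X.mapLe hle).append (.cons huv (Y.mapLe hle)), ?_, ?_⟩
  · have hv : v ∈ M.support.tail := M.end_mem_tail_support_of_ne huv.ne
    have hsub : List.Sublist (X.support ++ Y.support)
        (X.support ++ (M.support.tail ++ Y.support.tail)) := by
      rw [← Y.cons_tail_support]
      exact ((List.singleton_sublist.2 hv).append (.refl _)).append_left _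
    rw [Walk.isPath_def, Walk.support_append, Walk.tail_support_append] at hR
    rw [Walk.isPath_def, Walk.support_append, Walk.support_cons, List.tail_cons,
      Walk.support_mapLe_eq_support, Walk.support_mapLe_eq_support]
    exact hR.sublist hsub
  · have hnd := hR.isTrail.edges_nodup
    simp only [Walk.edges_append] at hnd
    intro e he
    simp only [Walk.edges_append, Walk.edges_cons, Walk.edges_mapLe_eq_edges, List.mem_append,
      List.mem_cons] at he
    rcases he with heX | rfl | heY
    · exact .inr ⟨X.edges_subset_edgeSet heX,
        fun heM => List.disjoint_of_nodup_append hnd heX (List.mem_append_left _ heM)⟩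
    · exact .inl rfl
    · exact .inr ⟨Y.edges_subset_edgeSet heY,
        fun heM => List.disjoint_of_nodup_append hnd.of_append_right heM heY⟩

theorem IsAcyclic.exists_isPath_replacing_path (hT : T.IsAcyclic) (hle : T ≤ G) {u v x y : V}
    (huv : G.Adj u v) {P : T.Walk u v} (hP : P.IsPath) {R : T.Walk x y} (hR : R.IsPath)
    (hu : u ∈ R.support) (hv : v ∈ R.support) :
    ∃ p : G.Walk x y, p.IsPath ∧ ∀ e ∈ p.edges, e = s(u, v) ∨ (e ∈ T.edgeSet ∧ e ∉ P.edges) := by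
  obtain ⟨R₀, R₁, hR₀, hR₁, rfl⟩ := hR.mem_support_iff_exists_append.mp hu
  rcases (Walk.mem_support_append_iff _ _).mp hv with hv₀ | hv₁
  · obtain ⟨X, M, -, hM, rfl⟩ := hR₀.mem_support_iff_exists_append.mp hv₀
    have hMP : M = P.reverse := congrArg Subtype.val <|
      (hT.subsingleton_path v u).elim ⟨M, hM⟩ ⟨P.reverse, hP.reverse⟩
    rw [← Walk.append_assoc] at hR
    obtain ⟨p, hp, hpe⟩ := exists_isPath_replacing_segment hle hR huv.symm
    refine ⟨p, hp, fun e he => ?_⟩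
    simpa [hMP, Sym2.eq_swap] using hpe e he
  · obtain ⟨M, Y, hM, -, rfl⟩ := hR₁.mem_support_iff_exists_append.mp hv₁
    obtain rfl : M = P := congrArg Subtype.val <|
      (hT.subsingleton_path u v).elim ⟨M, hM⟩ ⟨P, hP⟩
    exact exists_isPath_replacing_segment hle hR huv

end SimpleGraph

section

variable {V α : Type*} {G T : SimpleGraph V}

theorem IsRainbowConnected.rc_le {k : ℕ} {c : Sym2 V → Fin k}
    (h : IsRainbowConnected G c) : rc G ≤ k :=
  Nat.sInf_le ⟨c, h⟩

theorem SimpleGraph.Connected.isRainbowConnected_of_injOn (hG : G.Connected) {c : Sym2 V → α}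
    (hc : Set.InjOn c G.edgeSet) : IsRainbowConnected G c := by
  classical
  intro u v
  let p := (hG u v).some.toPath
  exact ⟨p, p.isPath, p.isPath.isTrail.nodup_map_edges_of_injOn hc
    fun _ he => p.1.edges_subset_edgeSet he⟩

theorem IsRainbowConnected.injOn_edgeSet {c : Sym2 V → α} (h : IsRainbowConnected G c)
    (hG : G.IsTree) : Set.InjOn c G.edgeSet := by
  intro d hd f hf hdf
  induction d using Sym2.ind with | _ a b =>
  induction f using Sym2.ind with | _ a' b' =>
  obtain ⟨x, y, p, hp, hd_p, hf_p⟩ := hG.exists_isPath_mem_edges_mem_edges hd hf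
  obtain ⟨q, hq, hnodup⟩ := h x y
  obtain rfl : q = p := (hG.existsUnique_path x y).unique hq hp
  exact List.inj_on_of_nodup_map hnodup hd_p hf_p hdf

theorem SimpleGraph.IsTree.rc_eq_ncard_edgeSet [Finite V] (hG : G.IsTree)
    (hne : G.edgeSet.Nonempty) : rc G = G.edgeSet.ncard := by
  obtain ⟨e, he⟩ := hne
  obtain ⟨c, hc, -⟩ := G.edgeSet.toFinite.exists_fin_injOn_of_mem le_rfl he
  have hrc := hG.connected.isRainbowConnected_of_injOn hc
  refine le_antisymm hrc.rc_le ?_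
  obtain ⟨c', hc'⟩ : ∃ c' : Sym2 V → Fin (rc G), IsRainbowConnected G c' :=
    Nat.sInf_mem (s := {k | ∃ c : Sym2 V → Fin k, IsRainbowConnected G c}) ⟨_, c, hrc⟩
  simpa using Set.ncard_le_ncard_of_injOn c' (fun _ _ => Set.mem_univ _) (hc'.injOn_edgeSet hG)

theorem SimpleGraph.IsTree.isRainbowConnected_of_injOn_sdiff (hT : T.IsTree) (hle : T ≤ G)
    {u v : V} (huv : G.Adj u v) (hTuv : ¬T.Adj u v) {P : T.Walk u v} (hP : P.IsPath)
    {f₁ f₂ : Sym2 V} (hf₁ : f₁ ∈ P.edges) (hf₂ : f₂ ∈ P.edges) (hu : u ∈ f₁) (hv : v ∈ f₂)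
    (hf₁₂ : f₁ ≠ f₂) {c : Sym2 V → α}
    (hcs : Set.InjOn c (T.edgeSet \ {f₂})) (hc : ∀ e ∉ T.edgeSet \ {f₂}, c e = c f₁) :
    IsRainbowConnected G c := by
  have hf₁s : f₁ ∈ T.edgeSet \ {f₂} := ⟨P.edges_subset_edgeSet hf₁, hf₁₂⟩
  intro x y
  obtain ⟨R, hR, -⟩ := hT.existsUnique_path x y
  by_cases hR₁₂ : f₁ ∈ R.edges ∧ f₂ ∈ R.edges
  · obtain ⟨p, hp, hpe⟩ := hT.isAcyclic.exists_isPath_replacing_path hle huv hP hR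
      (R.mem_support_of_mem_edges hR₁₂.1 hu) (R.mem_support_of_mem_edges hR₁₂.2 hv)
    have hc' := hcs.insert_sdiff_singleton hf₁s (hc s(u, v) fun h => hTuv h.1)
    refine ⟨p, hp, hp.isTrail.nodup_map_edges_of_injOn hc' fun e he => ?_⟩
    rcases hpe e he with rfl | ⟨heT, heP⟩
    · exact Set.mem_insert _ _
    · exact .inr ⟨⟨heT, fun h => heP (h ▸ hf₂)⟩, fun h => heP (h ▸ hf₁)⟩
  · refine ⟨R.mapLe hle, hR.mapLe hle, ?_⟩
    rw [Walk.edges_mapLe_eq_edges]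
    rcases not_and_or.mp hR₁₂ with h₁ | h₂
    · have hc' := hcs.insert_sdiff_singleton hf₁s (hc f₂ fun h => h.2 rfl)
      refine hR.isTrail.nodup_map_edges_of_injOn hc' fun e he => ?_
      by_cases he₂ : e = f₂
      · exact .inl he₂
      · exact .inr ⟨⟨R.edges_subset_edgeSet he, he₂⟩, fun h => h₁ (h ▸ he)⟩
    · exact hR.isTrail.nodup_map_edges_of_injOn hcs
        fun e he => ⟨R.edges_subset_edgeSet he, fun h => h₂ (h ▸ he)⟩

theorem SimpleGraph.Connected.exists_isRainbowConnected_of_not_isTree [Finite V]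
    (hG : G.Connected) (hnt : ¬G.IsTree) :
    ∃ c : Sym2 V → Fin (Nat.card V - 2), IsRainbowConnected G c := by
  obtain ⟨T, hle, hT⟩ := hG.exists_isTree_le
  obtain ⟨u, v, huv, hTuv⟩ : ∃ u v, G.Adj u v ∧ ¬T.Adj u v := by
    by_contra! h
    exact hnt (le_antisymm hle (fun _ _ => h _ _) ▸ hT)
  obtain ⟨P, hP, -⟩ := hT.existsUnique_path u v
  have hPnil : ¬P.Nil := Walk.not_nil_of_ne huv.ne
  have hf₁₂ : s(u, P.snd) ≠ s(P.penultimate, v) := by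
    rw [Ne, Sym2.eq_iff]
    rintro (⟨-, h⟩ | ⟨h, -⟩)
    · exact hTuv (h ▸ P.adj_snd hPnil)
    · exact huv.ne h
  have hf₁ := P.mk_start_snd_mem_edges hPnil
  have hf₂ := P.mk_penultimate_end_mem_edges hPnil
  have hs : (T.edgeSet \ {s(P.penultimate, v)}).ncard ≤ Nat.card V - 2 := by
    have := hT.ncard_edgeSet_add_one
    rw [Set.ncard_sdiff_singleton_of_mem (P.edges_subset_edgeSet hf₂)]
    omega
  obtain ⟨c, hcs, hc⟩ := Set.toFinite _ |>.exists_fin_injOn_of_mem hs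
    ⟨P.edges_subset_edgeSet hf₁, hf₁₂⟩
  exact ⟨c, hT.isRainbowConnected_of_injOn_sdiff hle huv hTuv hP hf₁ hf₂
    (Sym2.mem_mk_left _ _) (Sym2.mem_mk_right _ _) hf₁₂ hcs hc⟩

end

/-- For a connected graph `G` on `n ≥ 2` vertices, `rc(G) = n - 1` iff `G` is a tree. -/
theorem rc_eq_card_sub_one_iff_isTree {V : Type*} [Fintype V] (G : SimpleGraph V)
    (hn : 2 ≤ Fintype.card V) (hconn : G.Connected) :
    rc G = Fintype.card V - 1 ↔ G.IsTree := by
  rw [← Nat.card_eq_fintype_card] at hn ⊢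
  constructor
  · intro hrc
    by_contra hnt
    obtain ⟨c, hc⟩ := hconn.exists_isRainbowConnected_of_not_isTree hnt
    have := hc.rc_le
    omega
  · intro hT
    have hcard := hT.ncard_edgeSet_add_one
    rw [hT.rc_eq_ncard_edgeSet (Set.nonempty_of_ncard_ne_zero (by omega))]
    omega
end

section
/- Let G be a connected graph with vertex set {v₁,…,vₙ} and edge set E, and let c be an edge coloring of G. Let G₀ be the graph obtained from G by attaching a new pendant vertex uᵢ to vᵢ (with pendant edge e'ᵢ = uᵢvᵢ) for each 1 ≤ i ≤ n, and let G' be the line graph of G₀. Define a vertex coloring c' of G' by c'(e) = c(e) for every original edge e of G, and c'(e'ᵢ) = c₀ for all i, where c₀ is a single new color not used by c. Then G' is rainbow vertex-connected under c' if and only if G is rainbow connected under c. -/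
open SimpleGraph

/-- The graph `G₀` obtained from `G` by attaching a new pendant vertex `uᵢ = Sum.inr vᵢ`
to each original vertex `vᵢ = Sum.inl vᵢ`. -/
def pendantGraph {V : Type*} (G : SimpleGraph V) : SimpleGraph (V ⊕ V) where
  Adj x y := match x, y with
    | Sum.inl a, Sum.inl b => G.Adj a b
    | Sum.inl a, Sum.inr b => a = b
    | Sum.inr a, Sum.inl b => a = b
    | Sum.inr _, Sum.inr _ => False
  symm := by
    constructor
    intro x y h
    cases x <;> cases y <;> simp_all [SimpleGraph.adj_comm, eq_comm]
  loopless := by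
    constructor
    intro x h
    cases x <;> simp_all

/-- The coloring of the edges of `pendantGraph G` (i.e. of the vertices of its line
graph): an original edge `e` of `G` keeps its color `Sum.inl (c e)`, and every pendant
edge receives the single new color `Sum.inr ()`, which is distinct from all colors
`Sum.inl (c e)` of original edges. -/
def pendantColoring {V α : Type*} (c : Sym2 V → α) : Sym2 (V ⊕ V) → α ⊕ Unit :=
  Sym2.lift ⟨fun x y => match x, y with
    | Sum.inl a, Sum.inl b => Sum.inl (c s(a, b))
    | _, _ => Sum.inr (), by
      intro x y
      cases x <;> cases y <;> simp [Sym2.eq_swap]⟩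

/-!
A path in the line graph between the pendant edges at `u` and `v` traces a `u`–`v` walk in `G₀`;
collapsing every pendant vertex onto its base vertex turns it into a `u`–`v` walk in `G` whose
edges (seen in `G₀`) lie on the path and are not pendant edges, hence are internal vertices of it.
Original edges keep their colors, so a shortest such walk is a rainbow path.

Conversely, pick original endpoints `a ∈ e` and `b ∈ f` of two edges of `G₀` and a rainbow
`a`–`b` path in `G`. Going from `e` through the edges of that path to `f` is a walk in the line
graph, and the internal vertices of the path it shortens to are distinct edges of the rainbow path.
-/

theorem List.Nodup.map_of_subset {β γ : Type*} {g : β → γ} {l l' : List β}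
    (h : (l.map g).Nodup) (h' : l'.Nodup) (hsub : l' ⊆ l) : (l'.map g).Nodup :=
  h'.map_on fun _ hx _ hy => List.inj_on_of_nodup_map h (hsub hx) (hsub hy)

namespace SimpleGraph

variable {V : Type*} {G : SimpleGraph V} {u v x : V}

theorem Walk.support_tail_dropLast_sublist (p : G.Walk u v) :
    p.support.tail.dropLast.Sublist p.support :=
  (List.dropLast_sublist _).trans (List.tail_sublist _)

theorem Walk.mem_support_tail_dropLast {p : G.Walk u v} (hx : x ∈ p.support) (hu : x ≠ u)
    (hv : x ≠ v) : x ∈ p.support.tail.dropLast := by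
  cases p with
  | nil => simp_all
  | cons _ q =>
    rw [support_cons, List.tail_cons]
    have hxq := (List.mem_cons.mp hx).resolve_left hu
    rw [← q.dropLast_support_concat] at hxq
    exact (List.mem_append.mp hxq).resolve_right (by simpa using hv)

theorem Walk.IsPath.ne_of_mem_support_tail_dropLast {p : G.Walk u v} (hp : p.IsPath)
    (hx : x ∈ p.support.tail.dropLast) : x ≠ u ∧ x ≠ v := by
  cases p with
  | nil => simp at hx
  | cons _ q =>
    have hnd := hp.support_nodup
    rw [support_cons, ← q.dropLast_support_concat, List.nodup_cons, List.nodup_append] at hnd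
    rw [support_cons, List.tail_cons] at hx
    exact ⟨by grind, by grind⟩

theorem exists_walk_edges_subset_of_mem {e : Sym2 V} (he : e ∈ G.edgeSet) (hu : u ∈ e)
    (hv : v ∈ e) : ∃ W : G.Walk u v, W.edges ⊆ [e] := by
  by_cases huv : u = v
  · subst huv
    exact ⟨.nil, by simp⟩
  · rw [(Sym2.mem_and_mem_iff huv).mp ⟨hu, hv⟩] at he ⊢
    exact ⟨.cons (G.mem_edgeSet.mp he) .nil, by simp⟩

theorem exists_lineGraph_walk_support_subset_of_mem {e f : G.edgeSet} (he : x ∈ e.val)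
    (hf : x ∈ f.val) : ∃ Q : G.lineGraph.Walk e f, Q.support ⊆ [e, f] := by
  by_cases hef : e = f
  · subst hef
    exact ⟨.nil, by simp⟩
  · exact ⟨.cons (lineGraph_adj_iff_exists.mpr ⟨hef, x, he, hf⟩) .nil, by simp⟩

theorem Walk.exists_walk_edges_subset_of_lineGraph {e f : G.edgeSet} (Q : G.lineGraph.Walk e f)
    (hu : u ∈ e.val) (hv : v ∈ f.val) :
    ∃ W : G.Walk u v, W.edges ⊆ Q.support.map Subtype.val := by
  induction Q generalizing u with
  | nil =>
    obtain ⟨W, hW⟩ := exists_walk_edges_subset_of_mem (Subtype.prop _) hu hv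
    exact ⟨W, by simpa using hW⟩
  | cons h Q ih =>
    obtain ⟨-, w, hw, hw'⟩ := lineGraph_adj_iff_exists.mp h
    obtain ⟨W₁, hW₁⟩ := exists_walk_edges_subset_of_mem (Subtype.prop _) hu hw
    obtain ⟨W₂, hW₂⟩ := ih hw' hv
    refine ⟨W₁.append W₂, ?_⟩
    rw [edges_append, support_cons, List.map_cons]
    exact List.append_subset.mpr
      ⟨List.Subset.trans hW₁ (by simp), List.Subset.trans hW₂ (List.subset_cons_self _ _)⟩

theorem Walk.exists_lineGraph_walk_support_subset (P : G.Walk u v) {e f : G.edgeSet}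
    (he : u ∈ e.val) (hf : v ∈ f.val) :
    ∃ Q : G.lineGraph.Walk e f, ∀ g ∈ Q.support, g = e ∨ g = f ∨ g.val ∈ P.edges := by
  induction P generalizing e with
  | nil =>
    obtain ⟨Q, hQ⟩ := exists_lineGraph_walk_support_subset_of_mem he hf
    exact ⟨Q, fun g hg => by simpa using hQ hg⟩
  | @cons u w v h P ih =>
    let E : G.edgeSet := ⟨s(u, w), h⟩
    obtain ⟨Q₁, hQ₁⟩ :=
      exists_lineGraph_walk_support_subset_of_mem (f := E) he (Sym2.mem_mk_left u w)
    obtain ⟨Q₂, hQ₂⟩ := ih (e := E) (Sym2.mem_mk_right u w) hf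
    refine ⟨Q₁.append Q₂, fun g hg => ?_⟩
    rcases (Q₁.mem_support_append_iff Q₂).mp hg with hg | hg
    · rcases List.mem_pair.mp (hQ₁ hg) with rfl | rfl <;> simp [E]
    · rcases hQ₂ g hg with rfl | rfl | hg <;> simp [E, hg]

end SimpleGraph

namespace pendantGraph

variable {V : Type*} {G : SimpleGraph V}

def inlHom (G : SimpleGraph V) : G →g pendantGraph G := ⟨Sum.inl, id⟩

@[simp]
theorem coe_inlHom : ⇑(inlHom G) = Sum.inl := rfl

def pendantEdge (G : SimpleGraph V) (v : V) : (pendantGraph G).edgeSet :=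
  ⟨s(Sum.inl v, Sum.inr v), rfl⟩

theorem exists_inl_mem {e : Sym2 (V ⊕ V)} (he : e ∈ (pendantGraph G).edgeSet) :
    ∃ a, Sum.inl a ∈ e := by
  induction e using Sym2.ind with
  | h x y =>
    rcases x with a | a
    · exact ⟨a, Sym2.mem_mk_left _ _⟩
    rcases y with b | b
    · exact ⟨b, Sym2.mem_mk_right _ _⟩
    · exact he.elim

theorem exists_walk_edges_map_inl_subset {x y : V ⊕ V} (W : (pendantGraph G).Walk x y) :
    ∃ q : G.Walk (Sum.elim id id x) (Sum.elim id id y),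
      q.edges.map (Sym2.map Sum.inl) ⊆ W.edges := by
  induction W with
  | nil => exact ⟨.nil, by simp⟩
  | @cons x z y h W ih =>
    obtain ⟨q, hq⟩ := ih
    rcases x with a | a <;> rcases z with b | b
    · exact ⟨.cons (show G.Adj a b from h) q, List.cons_subset_cons _ hq⟩
    · cases h
      exact ⟨q, List.Subset.trans hq (List.subset_cons_self _ _)⟩
    · cases h
      exact ⟨q, List.Subset.trans hq (List.subset_cons_self _ _)⟩
    · exact h.elim

end pendantGraph

theorem pendantColoring_map_inl {V α : Type*} (c : Sym2 V → α) (E : Sym2 V) :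
    pendantColoring c (E.map Sum.inl) = Sum.inl (c E) := by
  induction E using Sym2.ind with
  | h x y => rfl

theorem nodup_map_pendantColoring_map_inl {V α : Type*} (c : Sym2 V → α) (l : List (Sym2 V)) :
    ((l.map (Sym2.map Sum.inl)).map (pendantColoring c)).Nodup ↔ (l.map c).Nodup := by
  rw [List.map_map, show pendantColoring c ∘ Sym2.map Sum.inl = Sum.inl ∘ c from
    funext (pendantColoring_map_inl c), ← List.map_map, List.nodup_map_iff Sum.inl_injective]

section

open pendantGraph

variable {V α : Type*} {G : SimpleGraph V} {c : Sym2 V → α}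

theorem IsRainbowConnected.of_lineGraph_pendantGraph
    (h : IsRainbowVertexConnected (pendantGraph G).lineGraph (fun e => pendantColoring c e.val)) :
    IsRainbowConnected G c := by
  classical
  intro u v
  obtain ⟨Q, -, hQc⟩ := h (pendantEdge G u) (pendantEdge G v)
  obtain ⟨W, hW⟩ := Q.exists_walk_edges_subset_of_lineGraph (u := Sum.inr u) (v := Sum.inr v)
    (by simp [pendantEdge]) (by simp [pendantEdge])
  obtain ⟨q, hq⟩ := exists_walk_edges_map_inl_subset W
  refine ⟨q.bypass, q.bypass_isPath, ?_⟩
  have hsub :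
      q.bypass.edges.map (Sym2.map Sum.inl) ⊆ (Q.support.tail.dropLast).map Subtype.val := by
    intro E hE
    obtain ⟨E', hE', rfl⟩ := List.mem_map.mp hE
    obtain ⟨g, hg, hgE⟩ := List.mem_map.mp
      (hW (hq (List.mem_map_of_mem (q.edges_bypass_subset_edges hE'))))
    have hne : ∀ w, g ≠ pendantEdge G w := by
      rintro w rfl
      have hmem : Sum.inr w ∈ Sym2.map Sum.inl E' := hgE ▸ Sym2.mem_mk_right _ _
      simp [Sym2.mem_map] at hmem
    exact List.mem_map.mpr ⟨g, Q.mem_support_tail_dropLast hg (hne u) (hne v), hgE⟩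
  have hnd : (q.bypass.edges.map (Sym2.map (Sum.inl : V → V ⊕ V))).Nodup :=
    q.bypass_isPath.isTrail.edges_nodup.map (Sym2.map.injective Sum.inl_injective)
  rw [← nodup_map_pendantColoring_map_inl c]
  exact (List.map_map ▸ hQc).map_of_subset hnd hsub

theorem IsRainbowConnected.isRainbowVertexConnected_lineGraph_pendantGraph
    (h : IsRainbowConnected G c) :
    IsRainbowVertexConnected (pendantGraph G).lineGraph (fun e => pendantColoring c e.val) := by
  classical
  intro e f
  obtain ⟨a, ha⟩ := exists_inl_mem e.2
  obtain ⟨b, hb⟩ := exists_inl_mem f.2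
  obtain ⟨P, -, hPc⟩ := h a b
  obtain ⟨Q, hQ⟩ := (P.map (inlHom G)).exists_lineGraph_walk_support_subset ha hb
  have hinternal := Q.bypass.support_tail_dropLast_sublist
  refine ⟨Q.bypass, Q.bypass_isPath, ?_⟩
  have hsub :
      (Q.bypass.support.tail.dropLast).map Subtype.val ⊆ P.edges.map (Sym2.map Sum.inl) := by
    intro E hE
    obtain ⟨g, hg, rfl⟩ := List.mem_map.mp hE
    obtain ⟨hge, hgf⟩ := Q.bypass_isPath.ne_of_mem_support_tail_dropLast hg
    rcases hQ g (Q.support_bypass_subset_support (hinternal.subset hg)) with hg | hg | hg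
    · exact absurd hg hge
    · exact absurd hg hgf
    · rwa [Walk.edges_map, coe_inlHom] at hg
  have hnd := (hinternal.nodup Q.bypass_isPath.support_nodup).map Subtype.val_injective
  simpa [List.map_map] using
    ((nodup_map_pendantColoring_map_inl c _).mpr hPc).map_of_subset hnd hsub

end

theorem lineGraph_pendant_rainbowVertexConnected_iff_general {V α : Type*} (G : SimpleGraph V)
    (c : Sym2 V → α) :
    IsRainbowVertexConnected (pendantGraph G).lineGraph
      (fun e => pendantColoring c e.val) ↔ IsRainbowConnected G c :=
  ⟨IsRainbowConnected.of_lineGraph_pendantGraph,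
    IsRainbowConnected.isRainbowVertexConnected_lineGraph_pendantGraph⟩

/-- Let `G₀` be obtained from a connected graph `G` by attaching a pendant vertex to each
vertex, and let `G'` be the line graph of `G₀`, whose vertices (the edges of `G₀`) are
colored by keeping the color of each original edge of `G` and giving all pendant edges one
common new color. Then `G'` is rainbow vertex-connected iff `G` is rainbow connected. -/
theorem lineGraph_pendant_rainbowVertexConnected_iff {V α : Type*} (G : SimpleGraph V)
    (hconn : G.Connected) (c : Sym2 V → α) :
    IsRainbowVertexConnected (pendantGraph G).lineGraph
      (fun e => pendantColoring c e.val) ↔ IsRainbowConnected G c :=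
  lineGraph_pendant_rainbowVertexConnected_iff_general G c
end
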